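/- arXiv:1904.13162 — 2 statements merged into one kernel-verified Lean document; each statement's English description precedes it below -/
import Mathlib

section
/- For a nonnegative random variable X and real numbers 0 < p < q, one has ∫_0^∞ (E[min{x^q, X}]/x^q) · p x^{p-1} dx = (q/(q-p)) · E[X^{p/q}]. -/
open MeasureTheory Real Set

/-!
Tonelli exchanges the two integrals, which reduces the claim to the case of a constant
`X = c = t ^ q`. Then the integrand is `p x ^ (p - 1)` for `x ≤ t`, contributing `t ^ p`, and
`p t ^ q x ^ (p - 1 - q)` for `x > t`, contributing `p / (q - p) * t ^ p`.
-/

theorem lintegral_Ioc_ofReal_mul_rpow_sub_one {p t : ℝ} (hp : 0 < p) (ht : 0 ≤ t) :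
    ∫⁻ x in Ioc 0 t, ENNReal.ofReal (p * x ^ (p - 1)) = ENNReal.ofReal (t ^ p) := by
  have hint : IntegrableOn (fun x : ℝ => p * x ^ (p - 1)) (Ioc 0 t) :=
    ((intervalIntegrable_iff_integrableOn_Ioc_of_le ht).1
      (intervalIntegral.intervalIntegrable_rpow' (by linarith))).const_mul p
  rw [← ofReal_integral_eq_lintegral_ofReal hint]
  · rw [← intervalIntegral.integral_of_le ht, intervalIntegral.integral_const_mul,
      integral_rpow (Or.inl (by linarith)), sub_add_cancel, zero_rpow hp.ne', sub_zero, mul_div_cancel₀ _ hp.ne']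
  · filter_upwards [ae_restrict_mem measurableSet_Ioc] with x hx
    have := hx.1
    positivity

theorem lintegral_Ioi_ofReal_rpow_neg_sub_one {s t : ℝ} (hs : 0 < s) (ht : 0 < t) :
    ∫⁻ x in Ioi t, ENNReal.ofReal (x ^ (-s - 1)) = ENNReal.ofReal (t ^ (-s) / s) := by
  rw [← ofReal_integral_eq_lintegral_ofReal (integrableOn_Ioi_rpow_of_lt (by linarith) ht),
    integral_Ioi_rpow_of_lt (by linarith) ht, sub_add_cancel, neg_div_neg_eq]
  filter_upwards [ae_restrict_mem measurableSet_Ioi] with x hx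
  have := ht.trans hx
  positivity

theorem lintegral_min_rpow_div_rpow {p q t : ℝ} (hp : 0 < p) (hpq : p < q) (ht : 0 ≤ t) :
    ∫⁻ x in Ioi 0, min (ENNReal.ofReal (x ^ q)) (ENNReal.ofReal (t ^ q)) / ENNReal.ofReal (x ^ q)
        * ENNReal.ofReal (p * x ^ (p - 1))
      = ENNReal.ofReal (q / (q - p) * t ^ p) := by
  have hq : 0 < q := hp.trans hpq
  have hqp : 0 < q - p := by linarith
  obtain rfl | ht := ht.eq_or_lt
  · simp [zero_rpow hq.ne', zero_rpow hp.ne']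
  have hbelow : ∀ x ∈ Ioc 0 t, min (ENNReal.ofReal (x ^ q)) (ENNReal.ofReal (t ^ q))
      / ENNReal.ofReal (x ^ q) * ENNReal.ofReal (p * x ^ (p - 1))
      = ENNReal.ofReal (p * x ^ (p - 1)) := by
    rintro x ⟨hx0, hxt⟩
    rw [min_eq_left (ENNReal.ofReal_le_ofReal (rpow_le_rpow hx0.le hxt hq.le)),
      ENNReal.div_self (by simp [rpow_pos_of_pos hx0]) ENNReal.ofReal_ne_top, one_mul]
  have habove : ∀ x ∈ Ioi t, min (ENNReal.ofReal (x ^ q)) (ENNReal.ofReal (t ^ q))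
      / ENNReal.ofReal (x ^ q) * ENNReal.ofReal (p * x ^ (p - 1))
      = ENNReal.ofReal (p * t ^ q) * ENNReal.ofReal (x ^ (-(q - p) - 1)) := by
    intro x (htx : t < x)
    have hx0 := ht.trans htx
    rw [min_eq_right (ENNReal.ofReal_le_ofReal (rpow_le_rpow ht.le htx.le hq.le)),
      ← ENNReal.ofReal_div_of_pos (rpow_pos_of_pos hx0 q), ← ENNReal.ofReal_mul (by positivity),
      ← ENNReal.ofReal_mul (by positivity), show -(q - p) - 1 = p - 1 - q by ring,
      rpow_sub hx0 (p - 1) q]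
    congr 1
    field_simp
  have htail : p * t ^ q * (t ^ (-(q - p)) / (q - p)) = p / (q - p) * t ^ p := by
    rw [mul_div_assoc', mul_assoc, ← rpow_add ht, show q + -(q - p) = p by ring]
    ring
  rw [← Ioc_union_Ioi_eq_Ioi ht.le, lintegral_union measurableSet_Ioi (Ioc_disjoint_Ioi le_rfl),
    setLIntegral_congr_fun measurableSet_Ioc hbelow,
    setLIntegral_congr_fun measurableSet_Ioi habove, lintegral_const_mul' _ _ ENNReal.ofReal_ne_top,
    lintegral_Ioc_ofReal_mul_rpow_sub_one hp ht.le, lintegral_Ioi_ofReal_rpow_neg_sub_one hqp ht,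
    ← ENNReal.ofReal_mul (by positivity), htail,
    ← ENNReal.ofReal_add (by positivity) (mul_nonneg (div_pos hp hqp).le (by positivity))]
  congr 1
  field_simp
  ring

theorem lintegral_min_div_rpow {p q c : ℝ} (hp : 0 < p) (hpq : p < q) (hc : 0 ≤ c) :
    ∫⁻ x in Ioi 0, min (ENNReal.ofReal (x ^ q)) (ENNReal.ofReal c) / ENNReal.ofReal (x ^ q)
        * ENNReal.ofReal (p * x ^ (p - 1))
      = ENNReal.ofReal (q / (q - p)) * ENNReal.ofReal (c ^ (p / q)) := by
  have hq : q ≠ 0 := (hp.trans hpq).ne'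
  have hcq : (c ^ q⁻¹) ^ q = c := rpow_inv_rpow hc hq
  have hcp : (c ^ q⁻¹) ^ p = c ^ (p / q) := by rw [← rpow_mul hc, inv_mul_eq_div]
  have := lintegral_min_rpow_div_rpow hp hpq (rpow_nonneg hc q⁻¹)
  rwa [hcq, hcp, ENNReal.ofReal_mul (div_nonneg (hp.trans hpq).le (by linarith))] at this

theorem stmt1 {Ω : Type*} [MeasurableSpace Ω] (P : Measure Ω) [IsProbabilityMeasure P]
    (X : Ω → ℝ) (hX : Measurable X) (hX0 : ∀ ω, 0 ≤ X ω)
    (p q : ℝ) (hp : 0 < p) (hpq : p < q) :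
    ∫⁻ x in Set.Ioi (0 : ℝ),
        (∫⁻ ω, min (ENNReal.ofReal (x ^ q)) (ENNReal.ofReal (X ω)) ∂P) / ENNReal.ofReal (x ^ q)
          * ENNReal.ofReal (p * x ^ (p - 1))
      = ENNReal.ofReal (q / (q - p)) * ∫⁻ ω, ENNReal.ofReal (X ω ^ (p / q)) ∂P := by
  calc _ = ∫⁻ x in Ioi 0, ∫⁻ ω, min (ENNReal.ofReal (x ^ q)) (ENNReal.ofReal (X ω))
          / ENNReal.ofReal (x ^ q) * ENNReal.ofReal (p * x ^ (p - 1)) ∂P := by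
        refine lintegral_congr fun x => ?_
        simp_rw [div_eq_mul_inv]
        rw [lintegral_mul_const' _ _ ENNReal.ofReal_ne_top, lintegral_mul_const _ (by fun_prop)]
    _ = ∫⁻ ω, ∫⁻ x in Ioi 0, min (ENNReal.ofReal (x ^ q)) (ENNReal.ofReal (X ω))
          / ENNReal.ofReal (x ^ q) * ENNReal.ofReal (p * x ^ (p - 1)) ∂volume ∂P :=
        lintegral_lintegral_swap (by fun_prop)
    _ = ∫⁻ ω, ENNReal.ofReal (q / (q - p)) * ENNReal.ofReal (X ω ^ (p / q)) ∂P :=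
        lintegral_congr fun ω => lintegral_min_div_rpow hp hpq (hX0 ω)
    _ = _ := lintegral_const_mul _ (by fun_prop)
end

section
/- Let Z, X ≥ 0 be random variables and 0 < p < q. Suppose for every λ > 0: P(Z > λ) ≤ P(X > λ^q) + (C/λ^q)·E[min{λ^q, X}] for a constant C > 0. Then E[Z^p] ≤ (1 + C·q/(q-p)) · E[X^{p/q}]. -/
/-!
Integrating the tail bound against `p t^(p-1) dt` turns the left side into `E[Z^p]` (layer cake)
and the first term on the right into `E[X^(p/q)]` (layer cake for `X^(1/q)`). By Tonelli the
second term becomes `C · E[p ∫₀^∞ t^(p-1-q) min(t^q, X) dt]`, and splitting the inner integral at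
`t = X^(1/q)` evaluates it to `q/(q-p) · X^(p/q)`.
-/

open MeasureTheory Real Set

lemma lintegral_Ioc_zero_rpow {s a : ℝ} (hs : -1 < s) (ha : 0 ≤ a) :
    ∫⁻ t in Ioc 0 a, ENNReal.ofReal (t ^ s) = ENNReal.ofReal (a ^ (s + 1) / (s + 1)) := by
  rw [← ofReal_integral_eq_lintegral_ofReal (intervalIntegral.intervalIntegrable_rpow' hs).1
    ((ae_restrict_iff' measurableSet_Ioc).2 (.of_forall fun t ht => rpow_nonneg ht.1.le _)),
    ← intervalIntegral.integral_of_le ha, integral_rpow (.inl hs),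
    zero_rpow (by linarith), sub_zero]

lemma lintegral_Ioi_rpow {s a : ℝ} (hs : s < -1) (ha : 0 < a) :
    ∫⁻ t in Ioi a, ENNReal.ofReal (t ^ s) = ENNReal.ofReal (a ^ (s + 1) / (-s - 1)) := by
  rw [← ofReal_integral_eq_lintegral_ofReal (integrableOn_Ioi_rpow_of_lt hs ha)
    ((ae_restrict_iff' measurableSet_Ioi).2
      (.of_forall fun t ht => rpow_nonneg (ha.trans ht).le _)),
    integral_Ioi_rpow_of_lt hs ha, neg_div, ← div_neg, neg_add']

lemma lintegral_rpow_mul_min_rpow {p q a : ℝ} (hp : 0 < p) (hpq : p < q) (ha : 0 < a) :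
    ENNReal.ofReal p * ∫⁻ t in Ioi 0,
        ENNReal.ofReal (t ^ (p - 1 - q)) * min (ENNReal.ofReal (t ^ q)) (ENNReal.ofReal (a ^ q))
      = ENNReal.ofReal (q / (q - p) * a ^ p) := by
  have hq : 0 < q := hp.trans hpq
  have hqp : 0 < q - p := sub_pos.2 hpq
  have below : ∀ t ∈ Ioc 0 a, ENNReal.ofReal (t ^ (p - 1 - q)) *
      min (ENNReal.ofReal (t ^ q)) (ENNReal.ofReal (a ^ q)) = ENNReal.ofReal (t ^ (p - 1)) := by
    intro t ⟨ht, hta⟩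
    rw [min_eq_left (ENNReal.ofReal_le_ofReal (rpow_le_rpow ht.le hta hq.le)),
      ← ENNReal.ofReal_mul (rpow_nonneg ht.le _), ← rpow_add ht, sub_add_cancel]
  have above : ∀ t ∈ Ioi a, ENNReal.ofReal (t ^ (p - 1 - q)) *
      min (ENNReal.ofReal (t ^ q)) (ENNReal.ofReal (a ^ q))
        = ENNReal.ofReal (a ^ q) * ENNReal.ofReal (t ^ (p - 1 - q)) := by
    intro t (hat : a < t)
    rw [min_eq_right (ENNReal.ofReal_le_ofReal (rpow_le_rpow ha.le hat.le hq.le)), mul_comm]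
  rw [← Ioc_union_Ioi_eq_Ioi ha.le, lintegral_union measurableSet_Ioi (Ioc_disjoint_Ioi le_rfl),
    setLIntegral_congr_fun measurableSet_Ioc below, setLIntegral_congr_fun measurableSet_Ioi above,
    lintegral_const_mul' _ _ ENNReal.ofReal_ne_top,
    lintegral_Ioc_zero_rpow (by linarith) ha.le, lintegral_Ioi_rpow (by linarith) ha,
    sub_add_cancel, show p - 1 - q + 1 = p - q by ring, show -(p - 1 - q) - 1 = q - p by ring,
    ← ENNReal.ofReal_mul (by positivity), ← ENNReal.ofReal_add (by positivity) (by positivity),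
    ← ENNReal.ofReal_mul hp.le, mul_div_assoc', ← rpow_add ha, add_sub_cancel]
  congr 1
  field_simp
  ring

lemma lintegral_rpow_mul_min {p q x : ℝ} (hp : 0 < p) (hpq : p < q) (hx : 0 ≤ x) :
    ENNReal.ofReal p * ∫⁻ t in Ioi 0,
        ENNReal.ofReal (t ^ (p - 1 - q)) * min (ENNReal.ofReal (t ^ q)) (ENNReal.ofReal x)
      = ENNReal.ofReal (q / (q - p) * x ^ (p / q)) := by
  have hq : 0 < q := hp.trans hpq
  rcases hx.eq_or_lt with rfl | hx
  · simp [zero_rpow (div_pos hp hq).ne']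
  have key := lintegral_rpow_mul_min_rpow hp hpq (rpow_pos_of_pos hx (1 / q))
  rwa [← rpow_mul hx.le, one_div_mul_cancel hq.ne', rpow_one, ← rpow_mul hx.le,
    one_div_mul_eq_div] at key

lemma lintegral_rpow_mul_lintegral_min {Ω : Type*} [MeasurableSpace Ω] {μ : Measure Ω}
    [SFinite μ] {X : Ω → ℝ} (hX : Measurable X) (hX0 : ∀ ω, 0 ≤ X ω) {p q : ℝ}
    (hp : 0 < p) (hpq : p < q) :
    ENNReal.ofReal p * ∫⁻ t in Ioi 0,
        ENNReal.ofReal (t ^ (p - 1 - q)) *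
          ∫⁻ ω, min (ENNReal.ofReal (t ^ q)) (ENNReal.ofReal (X ω)) ∂μ
      = ENNReal.ofReal (q / (q - p)) * ∫⁻ ω, ENNReal.ofReal (X ω ^ (p / q)) ∂μ := by
  simp_rw [← lintegral_const_mul' _ _ ENNReal.ofReal_ne_top]
  rw [lintegral_lintegral_swap (Measurable.aemeasurable (by fun_prop))]
  refine lintegral_congr fun ω => ?_
  rw [lintegral_const_mul' _ _ ENNReal.ofReal_ne_top, lintegral_rpow_mul_min hp hpq (hX0 ω),
    ENNReal.ofReal_mul (div_pos (hp.trans hpq) (sub_pos.2 hpq)).le]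

lemma lintegral_rpow_div_eq_lintegral_meas_rpow_lt_mul {Ω : Type*} [MeasurableSpace Ω]
    (μ : Measure Ω) {X : Ω → ℝ} (hX : Measurable X) (hX0 : ∀ ω, 0 ≤ X ω) {p q : ℝ}
    (hp : 0 < p) (hq : 0 < q) :
    ∫⁻ ω, ENNReal.ofReal (X ω ^ (p / q)) ∂μ
      = ENNReal.ofReal p * ∫⁻ t in Ioi 0, μ {ω | t ^ q < X ω} * ENNReal.ofReal (t ^ (p - 1)) := by
  have root_pow : ∀ ω, (X ω ^ (1 / q)) ^ q = X ω := fun ω => by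
    rw [← rpow_mul (hX0 ω), one_div_mul_cancel hq.ne', rpow_one]
  have lt_root_iff : ∀ t : ℝ, 0 < t → ∀ ω, t < X ω ^ (1 / q) ↔ t ^ q < X ω :=
    fun t ht ω => by
      conv_rhs => rw [← root_pow ω]
      exact (rpow_lt_rpow_iff ht.le (rpow_nonneg (hX0 ω) _) hq).symm
  have pow_root : ∀ ω, X ω ^ (p / q) = (X ω ^ (1 / q)) ^ p := fun ω => by
    rw [← rpow_mul (hX0 ω), one_div_mul_eq_div]
  simp_rw [pow_root]
  rw [lintegral_rpow_eq_lintegral_meas_lt_mul μ (.of_forall fun ω => rpow_nonneg (hX0 ω) _)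
    (hX.pow_const _).aemeasurable hp]
  congr 1
  refine setLIntegral_congr_fun measurableSet_Ioi fun t ht => ?_
  simp_rw [lt_root_iff t ht]

lemma ofReal_div_rpow_mul_ofReal_rpow {C t : ℝ} (hC : 0 ≤ C) (ht : 0 < t) (q r : ℝ) :
    ENNReal.ofReal (C / t ^ q) * ENNReal.ofReal (t ^ r)
      = ENNReal.ofReal C * ENNReal.ofReal (t ^ (r - q)) := by
  rw [← ENNReal.ofReal_mul (by positivity), ← ENNReal.ofReal_mul hC, rpow_sub ht,
    div_mul_eq_mul_div, mul_div_assoc]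

theorem stmt11 {Ω : Type*} [MeasurableSpace Ω] (P : Measure Ω) [IsProbabilityMeasure P]
    (Z X : Ω → ℝ) (hZ : Measurable Z) (hX : Measurable X)
    (hZ0 : ∀ ω, 0 ≤ Z ω) (hX0 : ∀ ω, 0 ≤ X ω)
    (p q C : ℝ) (hp : 0 < p) (hpq : p < q) (hC : 0 < C)
    (h : ∀ l : ℝ, 0 < l →
      P {ω | Z ω > l} ≤ P {ω | X ω > l ^ q}
        + ENNReal.ofReal (C / l ^ q)
          * ∫⁻ ω, min (ENNReal.ofReal (l ^ q)) (ENNReal.ofReal (X ω)) ∂P) :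
    ∫⁻ ω, ENNReal.ofReal (Z ω ^ p) ∂P
      ≤ ENNReal.ofReal (1 + C * q / (q - p)) * ∫⁻ ω, ENNReal.ofReal (X ω ^ (p / q)) ∂P := by
  have weighted_tail_bound : ∀ t ∈ Ioi (0 : ℝ),
      P {ω | t < Z ω} * ENNReal.ofReal (t ^ (p - 1))
        ≤ P {ω | t ^ q < X ω} * ENNReal.ofReal (t ^ (p - 1)) + ENNReal.ofReal C *
          (ENNReal.ofReal (t ^ (p - 1 - q)) *
            ∫⁻ ω, min (ENNReal.ofReal (t ^ q)) (ENNReal.ofReal (X ω)) ∂P) := fun t ht => by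
    have := mul_le_mul_left (h t ht) (ENNReal.ofReal (t ^ (p - 1)))
    rwa [add_mul, mul_right_comm, ofReal_div_rpow_mul_ofReal_rpow hC.le ht, mul_assoc] at this
  have tail_measurable :
      Measurable fun t : ℝ => P {ω | t ^ q < X ω} * ENNReal.ofReal (t ^ (p - 1)) := by
    have : Antitone fun s : ℝ => P {ω | s < X ω} := fun s s' hss =>
      measure_mono fun ω (hω : s' < X ω) => hss.trans_lt hω
    exact (this.measurable.comp (measurable_id.pow_const q)).mul (by fun_prop)
  calc ∫⁻ ω, ENNReal.ofReal (Z ω ^ p) ∂P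
      = ENNReal.ofReal p * ∫⁻ t in Ioi 0, P {ω | t < Z ω} * ENNReal.ofReal (t ^ (p - 1)) :=
        lintegral_rpow_eq_lintegral_meas_lt_mul P (.of_forall hZ0) hZ.aemeasurable hp
    _ ≤ ENNReal.ofReal p * ∫⁻ t in Ioi 0,
          (P {ω | t ^ q < X ω} * ENNReal.ofReal (t ^ (p - 1)) + ENNReal.ofReal C *
            (ENNReal.ofReal (t ^ (p - 1 - q)) *
              ∫⁻ ω, min (ENNReal.ofReal (t ^ q)) (ENNReal.ofReal (X ω)) ∂P)) := by
        gcongr _ * ?_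
        exact setLIntegral_mono' measurableSet_Ioi weighted_tail_bound
    _ = ∫⁻ ω, ENNReal.ofReal (X ω ^ (p / q)) ∂P + ENNReal.ofReal C *
          (ENNReal.ofReal (q / (q - p)) * ∫⁻ ω, ENNReal.ofReal (X ω ^ (p / q)) ∂P) := by
        rw [lintegral_add_left tail_measurable, lintegral_const_mul' _ _ ENNReal.ofReal_ne_top,
          mul_add, mul_left_comm, lintegral_rpow_mul_lintegral_min hX hX0 hp hpq,
          lintegral_rpow_div_eq_lintegral_meas_rpow_lt_mul P hX hX0 hp (hp.trans hpq)]
    _ = ENNReal.ofReal (1 + C * q / (q - p)) * ∫⁻ ω, ENNReal.ofReal (X ω ^ (p / q)) ∂P := by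
        rw [ENNReal.ofReal_add zero_le_one (by bound), ENNReal.ofReal_one, add_mul, one_mul,
          ← mul_assoc, ← ENNReal.ofReal_mul hC.le, mul_div_assoc]
end
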